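/- arXiv:2112.04897 — 5 statements merged into one kernel-verified Lean document; each statement's English description precedes it below -/
import Mathlib

section
/- Let Λ_{CC'} = {W_j, Λ_j, v_j} be a (C,C')-controlled g-fusion frame for H with bounds A, B, and let θ ∈ End*_A(H) be injective with closed range, commuting with C, C' and with every P_{W_j}. Then {W_j, Λ_j θ, v_j} is a (C,C')-controlled g-fusion frame for H with bounds A‖(θ*θ)⁻¹‖⁻¹ and B‖θ‖². -/
/-!
Because `θ` commutes with `C`, `C'` and every `P_{W_j}`, the frame sum of `{Λ_j θ}` at `f` is
the frame sum of `{Λ_j}` at `θ f`, so everything reduces to comparing `⟨θ f, θ f⟩` with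
`⟨f, f⟩`. The estimates `‖θ g‖² ≤ ‖θ‖² ‖g‖²` and `‖g‖² ≤ ‖(θ*θ)⁻¹‖ ‖θ g‖²` hold in norm; they
lift to the `A`-valued inner product by applying them to `g = f · (ε + ⟨T f, T f⟩)^(-1/2)`,
for which `⟨T g, T g⟩ ≤ 1`, and letting `ε → 0`.
-/

open scoped RightActions

noncomputable section

/-- The Hilbert C⋆-module class as it stood in Mathlib (December 2024): a right action of
`Aᵐᵒᵖ` and an `A`-valued inner product, `A`-linear on the right in the second argument. -/
class CStarModuleRight (A E : Type*) [NonUnitalSemiring A] [StarRing A] [Module ℂ A]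
    [AddCommGroup E] [Module ℂ E] [PartialOrder A] [SMul Aᵐᵒᵖ E] [Norm A] [Norm E]
    extends Inner A E where
  inner_add_right {x} {y} {z} : inner x (y + z) = inner x y + inner x z
  inner_self_nonneg {x} : 0 ≤ inner x x
  inner_self {x} : inner x x = 0 ↔ x = 0
  inner_op_smul_right {a : A} {x y : E} : inner x (y <• a) = inner x y * a
  inner_smul_right_complex {z : ℂ} {x} {y} : inner x (z • y) = z • inner x y
  star_inner x y : star (inner x y) = inner y x
  norm_eq_sqrt_norm_inner_self x : ‖x‖ = √‖inner x x‖

variable {A : Type*} [CStarAlgebra A] [PartialOrder A] [StarOrderedRing A]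
variable {H : Type*} [NormedAddCommGroup H] [NormedSpace ℂ H] [SMul Aᵐᵒᵖ H] [CStarModuleRight A H]
variable {J : Type*} {Hs : J → Type*} [∀ j, NormedAddCommGroup (Hs j)]
  [∀ j, NormedSpace ℂ (Hs j)] [∀ j, SMul Aᵐᵒᵖ (Hs j)] [∀ j, CStarModuleRight A (Hs j)]

open Filter Topology

open CFC Ring in
theorem le_smul_of_forall_conj_le {p q : A} (hq : 0 ≤ q) {r : ℝ}
    (h : ∀ d : A, IsSelfAdjoint d → d * q * d ≤ 1 → d * p * d ≤ r • 1) : p ≤ r • q := by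
  have hε : ∀ ε : ℝ, 0 < ε → p ≤ r • (ε • 1 + q) := fun ε hε => by
    set c : A := ε • 1 + q
    have hc : IsStrictlyPositive c :=
      (IsStrictlyPositive.smul hε isStrictlyPositive_one).add_nonneg hq
    have hdq : conjSqrt c⁻¹ʳ q ≤ 1 := by
      rw [← conjSqrt_ringInverse_self c]
      exact conjSqrt_le_conjSqrt (le_add_of_nonneg_left (smul_nonneg hε.le zero_le_one))
    have hdp := h (sqrt c⁻¹ʳ) (IsSelfAdjoint.of_nonneg (sqrt_nonneg _)) hdq
    calc p = conjSqrt c (conjSqrt c⁻¹ʳ p) := (conjSqrt_conjSqrt_ringInverse c p).symm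
      _ ≤ conjSqrt c (r • 1) := conjSqrt_le_conjSqrt hdp
      _ = r • c := by rw [map_smul, conjSqrt_one c]
  have hlim : Tendsto (fun ε : ℝ => r • (ε • (1 : A) + q)) (𝓝[>] 0) (𝓝 (r • q)) :=
    tendsto_nhdsWithin_of_tendsto_nhds
      ((by fun_prop : Continuous fun ε : ℝ => r • (ε • (1 : A) + q)).tendsto' 0 _ (by simp))
  exact ge_of_tendsto hlim (eventually_nhdsWithin_of_forall hε)

/-- A right Hilbert `A`-module is a left Hilbert `Aᵐᵒᵖ`-module for the inner product
`MulOpposite.op ⟨x, y⟩`; this gives access to Mathlib's theory of `CStarModule`. -/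
instance CStarModuleRight.toCStarModuleOp : CStarModule Aᵐᵒᵖ H where
  inner x y := .op (inner A x y)
  inner_add_right := congrArg MulOpposite.op CStarModuleRight.inner_add_right
  inner_self_nonneg := CStarModuleRight.inner_self_nonneg (A := A) (E := H)
  inner_self := MulOpposite.op_eq_zero_iff _ |>.trans CStarModuleRight.inner_self
  inner_op_smul_right {a _ _} :=
    congrArg MulOpposite.op (CStarModuleRight.inner_op_smul_right (a := a.unop))
  inner_smul_right_complex := congrArg MulOpposite.op CStarModuleRight.inner_smul_right_complex
  star_inner x y := congrArg MulOpposite.op (CStarModuleRight.star_inner x y)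
  norm_eq_sqrt_norm_inner_self x := CStarModuleRight.norm_eq_sqrt_norm_inner_self (A := A) x

namespace CStarModuleRight

variable {K L : Type*} [NormedAddCommGroup K] [NormedSpace ℂ K] [SMul Aᵐᵒᵖ K]
  [CStarModuleRight A K] [NormedAddCommGroup L] [NormedSpace ℂ L] [SMul Aᵐᵒᵖ L]
  [CStarModuleRight A L]

omit [StarOrderedRing A] in
lemma inner_sub_right {x y z : H} : inner A x (y - z) = inner A x y - inner A x z :=
  congrArg MulOpposite.unop (CStarModule.inner_sub_right (A := Aᵐᵒᵖ) (x := x) (y := y) (z := z))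

omit [StarOrderedRing A] in
lemma inner_op_smul_left {a : A} {x y : H} : inner A (x <• a) y = star a * inner A x y :=
  congrArg MulOpposite.unop
    (CStarModule.inner_op_smul_left (A := Aᵐᵒᵖ) (a := .op a) (x := x) (y := y))

omit [StarOrderedRing A] in
lemma norm_sq_eq (x : H) : ‖x‖ ^ 2 = ‖(inner A x x : A)‖ :=
  CStarModule.norm_sq_eq Aᵐᵒᵖ (x := x)

lemma norm_inner_le (x y : H) : ‖(inner A x y : A)‖ ≤ ‖x‖ * ‖y‖ :=
  CStarModule.norm_inner_le (A := Aᵐᵒᵖ) H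

omit [StarOrderedRing A] in
lemma inner_op_smul_self {d : A} (hd : IsSelfAdjoint d) (x : H) :
    inner A (x <• d) (x <• d) = d * inner A x x * d := by
  rw [inner_op_smul_right, inner_op_smul_left, hd.star_eq]

omit [StarOrderedRing A] in
lemma ext_inner_left {u v : H} (h : ∀ y, (inner A y u : A) = inner A y v) : u = v := by
  rw [← sub_eq_zero, ← inner_self (A := A), inner_sub_right, h, sub_self]

omit [StarOrderedRing A] in
lemma inner_right_eq_of_adjoint {θ : H → K} {θad : K → H}
    (hθad : ∀ x y, (inner A (θ x) y : A) = inner A x (θad y)) (y : K) (x : H) :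
    (inner A y (θ x) : A) = inner A (θad y) x := by
  rw [← star_inner, hθad, star_inner]

omit [StarOrderedRing A] in
lemma map_op_smul_of_adjoint {θ : H → K} {θad : K → H}
    (hθad : ∀ x y, (inner A (θ x) y : A) = inner A x (θad y)) (x : H) (a : A) :
    θ (x <• a) = θ x <• a :=
  ext_inner_left fun y => by
    rw [inner_right_eq_of_adjoint hθad, inner_op_smul_right, inner_op_smul_right,
      inner_right_eq_of_adjoint hθad]

theorem inner_self_le_smul_of_norm_sq_le {E : Type*} [SMul Aᵐᵒᵖ E] {S : E → K} {T : E → L}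
    (hS : ∀ x (a : A), S (x <• a) = S x <• a) (hT : ∀ x (a : A), T (x <• a) = T x <• a)
    {r : ℝ} (hr : 0 ≤ r) (h : ∀ g, ‖S g‖ ^ 2 ≤ r * ‖T g‖ ^ 2) (f : E) :
    (inner A (S f) (S f) : A) ≤ r • inner A (T f) (T f) := by
  refine le_smul_of_forall_conj_le inner_self_nonneg fun d hd hdT => ?_
  rw [← inner_op_smul_self hd, ← hT] at hdT
  have hT1 : ‖T (f <• d)‖ ^ 2 ≤ 1 := by
    rw [norm_sq_eq (A := A)]
    exact (CStarAlgebra.mem_Icc_iff_norm_le_one.mp ⟨inner_self_nonneg, hdT⟩).2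
  calc d * inner A (S f) (S f) * d = inner A (S (f <• d)) (S (f <• d)) := by
        rw [hS, inner_op_smul_self hd]
    _ ≤ ‖(inner A (S (f <• d)) (S (f <• d)) : A)‖ • 1 := by
        rw [← Algebra.algebraMap_eq_smul_one]
        exact IsSelfAdjoint.le_algebraMap_norm_self (star_inner (A := A) _ _)
    _ ≤ r • 1 := by
        rw [← norm_sq_eq]
        refine smul_le_smul_of_nonneg_right ?_ zero_le_one
        calc ‖S (f <• d)‖ ^ 2 ≤ r * ‖T (f <• d)‖ ^ 2 := h _
          _ ≤ r := mul_le_of_le_one_right hr hT1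

theorem inner_map_self_le_norm_sq_smul (θ : H →L[ℂ] K) (hθ : ∀ x (a : A), θ (x <• a) = θ x <• a)
    (f : H) : (inner A (θ f) (θ f) : A) ≤ ‖θ‖ ^ 2 • inner A f f :=
  inner_self_le_smul_of_norm_sq_le (T := id) hθ (fun _ _ => rfl) (sq_nonneg _)
    (fun g => by rw [← mul_pow]; gcongr; exact θ.le_opNorm g) f

lemma norm_sq_le_norm_mul_norm_map_sq {θ : H → K} {θad : K → H}
    (hθad : ∀ x y, (inner A (θ x) y : A) = inner A x (θad y)) {N : H →L[ℂ] H}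
    (hN : ∀ x, θad (θ (N x)) = x) (g : H) : ‖g‖ ^ 2 ≤ ‖N‖ * ‖θ g‖ ^ 2 := by
  have hg : ‖g‖ ^ 2 ≤ ‖θ g‖ * ‖θ (N g)‖ :=
    calc ‖g‖ ^ 2 = ‖(inner A (θ g) (θ (N g)) : A)‖ := by rw [norm_sq_eq (A := A), hθad, hN]
      _ ≤ ‖θ g‖ * ‖θ (N g)‖ := norm_inner_le _ _
  have hNg : ‖θ (N g)‖ ^ 2 ≤ ‖N‖ * ‖g‖ ^ 2 := by
    rw [norm_sq_eq (A := A), hθad, hN]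
    calc ‖(inner A (N g) g : A)‖ ≤ ‖N g‖ * ‖g‖ := norm_inner_le _ _
      _ ≤ ‖N‖ * ‖g‖ * ‖g‖ := by gcongr; exact N.le_opNorm g
      _ = ‖N‖ * ‖g‖ ^ 2 := by ring
  have hg4 : ‖g‖ ^ 2 * ‖g‖ ^ 2 ≤ ‖N‖ * ‖θ g‖ ^ 2 * ‖g‖ ^ 2 :=
    calc ‖g‖ ^ 2 * ‖g‖ ^ 2 ≤ (‖θ g‖ * ‖θ (N g)‖) ^ 2 := by rw [← sq]; gcongr
      _ = ‖θ g‖ ^ 2 * ‖θ (N g)‖ ^ 2 := mul_pow _ _ _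
      _ ≤ ‖θ g‖ ^ 2 * (‖N‖ * ‖g‖ ^ 2) := by gcongr
      _ = ‖N‖ * ‖θ g‖ ^ 2 * ‖g‖ ^ 2 := by ring
  rcases (sq_nonneg ‖g‖).eq_or_lt with hg0 | hg0
  · rw [← hg0]
    positivity
  · exact le_of_mul_le_mul_right hg4 hg0

theorem inner_self_le_norm_smul_inner_map {θ : H → K} {θad : K → H}
    (hθad : ∀ x y, (inner A (θ x) y : A) = inner A x (θad y)) {N : H →L[ℂ] H}
    (hN : ∀ x, θad (θ (N x)) = x) (f : H) : (inner A f f : A) ≤ ‖N‖ • inner A (θ f) (θ f) :=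
  inner_self_le_smul_of_norm_sq_le (S := id) (fun _ _ => rfl) (map_op_smul_of_adjoint hθad)
    (norm_nonneg N) (norm_sq_le_norm_mul_norm_map_sq hθad hN) f

end CStarModuleRight

theorem controlled_g_fusion_frame_comp_right_general
    (C C' : H →L[ℂ] H) (P : J → H →L[ℂ] H) (Λ : ∀ j, H →L[ℂ] Hs j)
    (v : J → A)
    (a b : ℝ) (ha : 0 < a) (hab : a ≤ b)
    (hsum : ∀ f : H, Summable fun j =>
      v j * v j * (inner A (Λ j (P j (C f))) (Λ j (P j (C' f))) : A))
    (hframe : ∀ f : H,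
      a • (inner A f f : A) ≤
        (∑' j, v j * v j * (inner A (Λ j (P j (C f))) (Λ j (P j (C' f))) : A)) ∧
      (∑' j, v j * v j * (inner A (Λ j (P j (C f))) (Λ j (P j (C' f))) : A)) ≤
        b • (inner A f f : A))
    (θ θad : H →L[ℂ] H)
    (hθad : ∀ x y : H, (inner A (θ x) y : A) = inner A x (θad y))
    (hθC : θ.comp C = C.comp θ) (hθC' : θ.comp C' = C'.comp θ)
    (hθP : ∀ j, θ.comp (P j) = (P j).comp θ)
    (N : H →L[ℂ] H)
    (hN₂ : (θad.comp θ).comp N = ContinuousLinearMap.id ℂ H) :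
    ∀ f : H,
      Summable (fun j =>
        v j * v j * (inner A (Λ j (θ (P j (C f)))) (Λ j (θ (P j (C' f)))) : A)) ∧
      (a * ‖N‖⁻¹) • (inner A f f : A) ≤
        (∑' j, v j * v j * (inner A (Λ j (θ (P j (C f)))) (Λ j (θ (P j (C' f)))) : A)) ∧
      (∑' j, v j * v j * (inner A (Λ j (θ (P j (C f)))) (Λ j (θ (P j (C' f)))) : A)) ≤
        (b * ‖θ‖ ^ 2) • (inner A f f : A) := by
  intro f
  have hθ_comm : ∀ (D : H →L[ℂ] H), θ.comp D = D.comp θ → ∀ j g, θ (P j (D g)) = P j (D (θ g)) :=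
    fun D hD j g => by
      rw [← ContinuousLinearMap.comp_apply θ (P j), hθP j, ContinuousLinearMap.comp_apply,
        ← ContinuousLinearMap.comp_apply θ D, hD, ContinuousLinearMap.comp_apply]
  simp only [hθ_comm C hθC, hθ_comm C' hθC']
  obtain ⟨hlow, hupp⟩ := hframe (θ f)
  refine ⟨hsum (θ f), le_trans ?_ hlow, hupp.trans ?_⟩
  · have hN : ∀ x, θad (θ (N x)) = x := fun x => DFunLike.congr_fun hN₂ x
    calc (a * ‖N‖⁻¹) • (inner A f f : A)
        ≤ (a * ‖N‖⁻¹) • ‖N‖ • (inner A (θ f) (θ f) : A) :=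
          smul_le_smul_of_nonneg_left
            (CStarModuleRight.inner_self_le_norm_smul_inner_map hθad hN f) (by positivity)
      _ = (a * (‖N‖⁻¹ * ‖N‖)) • (inner A (θ f) (θ f) : A) := by rw [smul_smul, mul_assoc]
      _ ≤ a • (inner A (θ f) (θ f) : A) :=
          smul_le_smul_of_nonneg_right (mul_le_of_le_one_right ha.le inv_mul_le_one)
            CStarModuleRight.inner_self_nonneg
  · rw [mul_smul]
    exact smul_le_smul_of_nonneg_left
      (CStarModuleRight.inner_map_self_le_norm_sq_smul θ
        (CStarModuleRight.map_op_smul_of_adjoint hθad) f) (ha.le.trans hab)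

/-- if `Λ_{CC'}` is a `(C,C')`-controlled g-fusion frame with bounds
`A, B` and `θ` is injective with closed range, commuting with `C`, `C'` and all
`P_{W_j}`, then `{W_j, Λ_jθ, v_j}` is a `(C,C')`-controlled g-fusion frame with
bounds `A‖(θ*θ)⁻¹‖⁻¹` and `B‖θ‖²`. -/
theorem controlled_g_fusion_frame_comp_right
    (C C' : H →L[ℂ] H) (P : J → H →L[ℂ] H) (Λ : ∀ j, H →L[ℂ] Hs j)
    (Λad : ∀ j, Hs j →L[ℂ] H) (v : J → A)
    (hΛad : ∀ (j) (x : H) (u : Hs j), (inner A (Λ j x) u : A) = inner A x (Λad j u))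
    (hP_idem : ∀ j, (P j).comp (P j) = P j)
    (hP_sa : ∀ (j) (f g : H), (inner A (P j f) g : A) = inner A f (P j g))
    (hC_sa : ∀ f g : H, (inner A (C f) g : A) = inner A f (C g))
    (hC'_sa : ∀ f g : H, (inner A (C' f) g : A) = inner A f (C' g))
    (hC_pos : ∀ f : H, 0 ≤ (inner A (C f) f : A))
    (hC'_pos : ∀ f : H, 0 ≤ (inner A (C' f) f : A))
    (hC_inv : Function.Bijective C) (hC'_inv : Function.Bijective C')
    (hCC' : C.comp C' = C'.comp C)
    (hCT : ∀ j, C.comp ((P j).comp ((Λad j).comp ((Λ j).comp (P j))))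
      = ((P j).comp ((Λad j).comp ((Λ j).comp (P j)))).comp C)
    (hC'T : ∀ j, C'.comp ((P j).comp ((Λad j).comp ((Λ j).comp (P j))))
      = ((P j).comp ((Λad j).comp ((Λ j).comp (P j)))).comp C')
    (hv_pos : ∀ j, 0 ≤ v j) (hv_inv : ∀ j, IsUnit (v j))
    (hv_central : ∀ (j) (a : A), Commute (v j) a)
    (a b : ℝ) (ha : 0 < a) (hab : a ≤ b)
    (hsum : ∀ f : H, Summable fun j =>
      v j * v j * (inner A (Λ j (P j (C f))) (Λ j (P j (C' f))) : A))
    (hframe : ∀ f : H,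
      a • (inner A f f : A) ≤
        (∑' j, v j * v j * (inner A (Λ j (P j (C f))) (Λ j (P j (C' f))) : A)) ∧
      (∑' j, v j * v j * (inner A (Λ j (P j (C f))) (Λ j (P j (C' f))) : A)) ≤
        b • (inner A f f : A))
    (θ θad : H →L[ℂ] H)
    (hθad : ∀ x y : H, (inner A (θ x) y : A) = inner A x (θad y))
    (hθ_inj : Function.Injective θ) (hθ_range : IsClosed (Set.range θ))
    (hθC : θ.comp C = C.comp θ) (hθC' : θ.comp C' = C'.comp θ)
    (hθP : ∀ j, θ.comp (P j) = (P j).comp θ)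
    (N : H →L[ℂ] H) (hN₁ : N.comp (θad.comp θ) = ContinuousLinearMap.id ℂ H)
    (hN₂ : (θad.comp θ).comp N = ContinuousLinearMap.id ℂ H) :
    ∀ f : H,
      Summable (fun j =>
        v j * v j * (inner A (Λ j (θ (P j (C f)))) (Λ j (θ (P j (C' f)))) : A)) ∧
      (a * ‖N‖⁻¹) • (inner A f f : A) ≤
        (∑' j, v j * v j * (inner A (Λ j (θ (P j (C f)))) (Λ j (θ (P j (C' f)))) : A)) ∧
      (∑' j, v j * v j * (inner A (Λ j (θ (P j (C f)))) (Λ j (θ (P j (C' f)))) : A)) ≤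
        (b * ‖θ‖ ^ 2) • (inner A f f : A) :=
  controlled_g_fusion_frame_comp_right_general C C' P Λ v a b ha hab hsum hframe θ θad hθad hθC hθC'
    hθP N hN₂
end
end

section
/- Let Λ_{CC'} = {W_j, Λ_j, v_j} be a (C,C')-controlled g-fusion frame for H with bounds A, B, and θ ∈ End*_A(L,H) injective with closed range such that θ commutes with Λ_j P_{W_j} C and Λ_j P_{W_j} C' for all j. Then {W_j, θΛ_j, v_j} is a (C,C')-controlled g-fusion frame with bounds A‖(θ*θ)⁻¹‖⁻¹ and B‖θ‖². -/
open scoped RightActions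

noncomputable section

/-- The class `CStarModule` as it stood in Mathlib of December 2024: a Hilbert C⋆-module
with a *right* action of `A` and an `A`-valued inner product that is linear in the second
argument. (Mathlib's present `CStarModule` uses a left action instead.) -/
class RightCStarModule (A : outParam <| Type*) (E : Type*) [NonUnitalSemiring A] [StarRing A]
    [Module ℂ A] [AddCommGroup E] [Module ℂ E] [PartialOrder A] [SMul Aᵐᵒᵖ E] [Norm A] [Norm E]
    extends Inner A E where
  inner_add_right {x} {y} {z} : inner x (y + z) = inner x y + inner x z
  inner_self_nonneg {x} : 0 ≤ inner x x
  inner_self {x} : inner x x = 0 ↔ x = 0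
  inner_op_smul_right {a : A} {x y : E} : inner x (y <• a) = inner x y * a
  inner_smul_right_complex {z : ℂ} {x} {y} : inner x (z • y) = z • inner x y
  star_inner x y : star (inner x y) = inner y x
  norm_eq_sqrt_norm_inner_self x : ‖x‖ = √‖inner x x‖

/-! The inequalities `‖(θ*θ)⁻¹‖⁻¹ • ⟪f, f⟫ ≤ ⟪θ f, θ f⟫ ≤ ‖θ‖² • ⟪f, f⟫` in `A` turn the frame
inequalities at `θ f` into those of the composed family, because `θ` commutes with `Λ_j P_{W_j} C`
and `Λ_j P_{W_j} C'`. Both are scalar norm inequalities upgraded to `A`-valued ones: for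
`A`-linear maps, normalising `x` by `d ^ (-1/2)`, where `d = ⟪w x, w x⟫ + ε`, moves the comparison
into the unit ball, where the norm of a positive element bounds it, and then `ε → 0`. -/

open Filter Topology in
lemma le_of_forall_pos_le_add_smul {M : Type*} [AddCommGroup M] [Module ℝ M] [TopologicalSpace M]
    [ContinuousAdd M] [ContinuousSMul ℝ M] [Preorder M] [ClosedIciTopology M] {x y : M} (z : M)
    (h : ∀ ε : ℝ, 0 < ε → x ≤ y + ε • z) : x ≤ y := by
  have hlim : Tendsto (fun ε : ℝ => y + ε • z) (𝓝[>] 0) (𝓝 y) := by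
    have hcont : Continuous fun ε : ℝ => y + ε • z :=
      continuous_const.add (continuous_id.smul continuous_const)
    simpa using (hcont.tendsto 0).mono_left nhdsWithin_le_nhds
  exact ge_of_tendsto hlim (eventually_mem_nhdsWithin.mono h)

namespace RightCStarModule

open MulOpposite

variable {A : Type*} [CStarAlgebra A] [PartialOrder A]

local notation "⟪" x ", " y "⟫" => (inner A x y : A)

section Algebraic

variable {E F G : Type*} [AddCommGroup E] [Module ℂ E] [Norm E] [SMul Aᵐᵒᵖ E] [RightCStarModule A E]
  [AddCommGroup F] [Module ℂ F] [Norm F] [SMul Aᵐᵒᵖ F] [RightCStarModule A F]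
  [AddCommGroup G] [Module ℂ G] [Norm G] [SMul Aᵐᵒᵖ G] [RightCStarModule A G]

/-- Read in `Aᵐᵒᵖ`, a right Hilbert `A`-module is a Hilbert C⋆-module in Mathlib's
left-action convention, so Mathlib's `CStarModule` API applies. -/
instance toCStarModuleMulOpposite : CStarModule Aᵐᵒᵖ E where
  inner x y := op ⟪x, y⟫
  inner_add_right := congrArg op inner_add_right
  inner_self_nonneg := op_le_op.mpr inner_self_nonneg
  inner_self := op_eq_zero_iff _ |>.trans inner_self
  inner_op_smul_right := congrArg op inner_op_smul_right
  inner_smul_right_complex := congrArg op inner_smul_right_complex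
  star_inner x y := congrArg op (star_inner x y)
  norm_eq_sqrt_norm_inner_self := norm_eq_sqrt_norm_inner_self

lemma norm_sq_eq (x : E) : ‖x‖ ^ 2 = ‖⟪x, x⟫‖ :=
  CStarModule.norm_sq_eq Aᵐᵒᵖ

lemma inner_op_smul_left (x y : E) (a : A) : ⟪x <• a, y⟫ = star a * ⟪x, y⟫ := by
  rw [← star_inner, inner_op_smul_right, star_mul, star_inner]

lemma inner_self_op_smul (x : E) (a : A) : ⟪x <• a, x <• a⟫ = star a * ⟪x, x⟫ * a := by
  rw [inner_op_smul_right, inner_op_smul_left, mul_assoc]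

lemma inner_sub_right (x y z : E) : ⟪x, y - z⟫ = ⟪x, y⟫ - ⟪x, z⟫ :=
  congrArg unop (CStarModule.inner_sub_right (A := Aᵐᵒᵖ) (x := x) (y := y) (z := z))

lemma ext_inner_left {x y : E} (h : ∀ z : E, ⟪z, x⟫ = ⟪z, y⟫) : x = y := by
  rw [← sub_eq_zero, ← inner_self (A := A), inner_sub_right, h, sub_self]

lemma op_smul_op_smul (x : E) (a b : A) : (x <• a) <• b = x <• (a * b) :=
  ext_inner_left fun z => by simp only [inner_op_smul_right, mul_assoc]

lemma op_smul_one (x : E) : x <• (1 : A) = x :=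
  ext_inner_left fun z => by rw [inner_op_smul_right, mul_one]

lemma map_op_smul_of_adjoint {T : E → F} {T' : F → E} (h : ∀ x y, ⟪T x, y⟫ = ⟪x, T' y⟫)
    (x : E) (a : A) : T (x <• a) = T x <• a :=
  ext_inner_left fun z => by
    rw [inner_op_smul_right, ← star_inner _ z, ← star_inner _ z, h, h, inner_op_smul_left,
      star_mul, star_star]

variable [StarOrderedRing A]

lemma norm_inner_le (x y : E) : ‖⟪x, y⟫‖ ≤ ‖x‖ * ‖y‖ :=
  CStarModule.norm_inner_le E (A := Aᵐᵒᵖ)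

lemma inner_self_le_smul_of_le_isStrictlyPositive {u : E → F} {w : E → G}
    (hu : ∀ x (a : A), u (x <• a) = u x <• a) (hw : ∀ x (a : A), w (x <• a) = w x <• a)
    {c : ℝ} (hc : 0 ≤ c) (h : ∀ x, ‖u x‖ ^ 2 ≤ c * ‖w x‖ ^ 2) {x : E} {d : A}
    (hd : IsStrictlyPositive d) (hxd : ⟪w x, w x⟫ ≤ d) : ⟪u x, u x⟫ ≤ c • d := by
  set s := d ^ (1 / 2 : ℝ)
  set b := d ^ (-(1 / 2) : ℝ)
  have hs : IsSelfAdjoint s := .of_nonneg CFC.rpow_nonneg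
  have hb : IsSelfAdjoint b := .of_nonneg CFC.rpow_nonneg
  have hss : star s * s = d := by
    rw [hs.star_eq, ← CFC.rpow_add hd.isUnit, add_halves, CFC.rpow_one d]
  have hbs : b * s = 1 := CFC.rpow_neg_mul_rpow _ hd
  have hsb : s * b = 1 := CFC.rpow_mul_rpow_neg _ hd
  have hwx : ⟪w (x <• b), w (x <• b)⟫ ≤ 1 := calc
    _ = star b * ⟪w x, w x⟫ * b := by rw [hw, inner_self_op_smul]
    _ ≤ star b * d * b := star_left_conjugate_le_conjugate hxd b
    _ = (b * s) * (s * b) := by rw [← hss, hb.star_eq, hs.star_eq]; noncomm_ring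
    _ = 1 := by rw [hbs, hsb, one_mul]
  have hux : ‖u (x <• b)‖ ^ 2 ≤ c := calc
    _ ≤ c * ‖⟪w (x <• b), w (x <• b)⟫‖ := by rw [← norm_sq_eq]; exact h _
    _ ≤ c * 1 := by
      gcongr
      exact (CStarAlgebra.norm_le_one_iff_of_nonneg _ inner_self_nonneg).mpr hwx
    _ = c := mul_one c
  calc ⟪u x, u x⟫ = star s * ⟪u (x <• b), u (x <• b)⟫ * s := by
        rw [← inner_self_op_smul, ← hu, op_smul_op_smul, hbs, op_smul_one]
    _ ≤ ‖⟪u (x <• b), u (x <• b)⟫‖ • (star s * s) :=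
        CStarAlgebra.star_left_conjugate_le_norm_smul (star_inner _ _)
    _ ≤ c • (star s * s) :=
        smul_le_smul_of_nonneg_right (by rwa [← norm_sq_eq]) (star_mul_self_nonneg s)
    _ = c • d := by rw [hss]

lemma inner_self_le_smul_of_norm_sq_le {u : E → F} {w : E → G}
    (hu : ∀ x (a : A), u (x <• a) = u x <• a) (hw : ∀ x (a : A), w (x <• a) = w x <• a)
    {c : ℝ} (hc : 0 ≤ c) (h : ∀ x, ‖u x‖ ^ 2 ≤ c * ‖w x‖ ^ 2) (x : E) :
    ⟪u x, u x⟫ ≤ c • ⟪w x, w x⟫ := by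
  refine le_of_forall_pos_le_add_smul (c • 1 : A) fun ε hε => ?_
  have hε' := isStrictlyPositive_algebraMap (A := A) hε
  calc ⟪u x, u x⟫ ≤ c • (⟪w x, w x⟫ + algebraMap ℝ A ε) :=
        inner_self_le_smul_of_le_isStrictlyPositive hu hw hc h
          (hε'.nonneg_add inner_self_nonneg) (le_add_of_nonneg_right hε'.nonneg)
    _ = c • ⟪w x, w x⟫ + ε • c • 1 := by
        rw [smul_add, Algebra.algebraMap_eq_smul_one, smul_comm]

end Algebraic

section Operators

variable [StarOrderedRing A]
variable {E F : Type*} [NormedAddCommGroup E] [NormedSpace ℂ E] [SMul Aᵐᵒᵖ E] [RightCStarModule A E]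
  [NormedAddCommGroup F] [NormedSpace ℂ F] [SMul Aᵐᵒᵖ F] [RightCStarModule A F]

lemma norm_sq_le_norm_mul_norm_sq_apply {T : E → F} {T' : F → E} {N : E →L[ℂ] E}
    (h : ∀ x y, ⟪T x, y⟫ = ⟪x, T' y⟫) (hN : ∀ x, T' (T (N x)) = x) (x : E) :
    ‖x‖ ^ 2 ≤ ‖N‖ * ‖T x‖ ^ 2 := by
  have hx : ‖x‖ ^ 2 ≤ ‖T x‖ * ‖T (N x)‖ := calc
    _ = ‖⟪T x, T (N x)⟫‖ := by rw [norm_sq_eq, h, hN]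
    _ ≤ _ := norm_inner_le _ _
  have hNx : ‖T (N x)‖ ^ 2 ≤ ‖N‖ * ‖x‖ ^ 2 := calc
    _ = ‖⟪N x, x⟫‖ := by rw [norm_sq_eq, h, hN]
    _ ≤ ‖N x‖ * ‖x‖ := norm_inner_le _ _
    _ ≤ ‖N‖ * ‖x‖ * ‖x‖ := by gcongr; exact N.le_opNorm x
    _ = ‖N‖ * ‖x‖ ^ 2 := by ring
  have hsq : ‖x‖ ^ 2 * ‖x‖ ^ 2 ≤ (‖N‖ * ‖T x‖ ^ 2) * ‖x‖ ^ 2 := calc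
    _ ≤ (‖T x‖ * ‖T (N x)‖) ^ 2 := by rw [sq (_ * _)]; exact mul_self_le_mul_self (sq_nonneg _) hx
    _ ≤ ‖T x‖ ^ 2 * (‖N‖ * ‖x‖ ^ 2) := by rw [mul_pow]; gcongr
    _ = (‖N‖ * ‖T x‖ ^ 2) * ‖x‖ ^ 2 := by ring
  rcases (sq_nonneg ‖x‖).eq_or_lt with hx0 | hxpos
  · rw [← hx0]
    positivity
  · exact le_of_mul_le_mul_right hsq hxpos

lemma inv_norm_smul_inner_self_le {T : E → F} {T' : F → E} {N : E →L[ℂ] E}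
    (h : ∀ x y, ⟪T x, y⟫ = ⟪x, T' y⟫) (hN : ∀ x, T' (T (N x)) = x) (x : E) :
    ‖N‖⁻¹ • ⟪x, x⟫ ≤ ⟪T x, T x⟫ := by
  have key : ⟪x, x⟫ ≤ ‖N‖ • ⟪T x, T x⟫ :=
    inner_self_le_smul_of_norm_sq_le (u := id) (fun _ _ => rfl) (map_op_smul_of_adjoint h)
      (norm_nonneg N) (norm_sq_le_norm_mul_norm_sq_apply h hN) x
  rcases (norm_nonneg N).eq_or_lt with hN0 | hNpos
  · rw [← hN0, inv_zero, zero_smul]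
    exact inner_self_nonneg
  · calc ‖N‖⁻¹ • ⟪x, x⟫ ≤ ‖N‖⁻¹ • ‖N‖ • ⟪T x, T x⟫ :=
          smul_le_smul_of_nonneg_left key (inv_nonneg.mpr hNpos.le)
      _ = ⟪T x, T x⟫ := inv_smul_smul₀ hNpos.ne' _

lemma inner_self_apply_le_norm_sq_smul {T : E →L[ℂ] F} {T' : F → E}
    (h : ∀ x y, ⟪T x, y⟫ = ⟪x, T' y⟫) (x : E) : ⟪T x, T x⟫ ≤ ‖T‖ ^ 2 • ⟪x, x⟫ :=
  inner_self_le_smul_of_norm_sq_le (w := id) (map_op_smul_of_adjoint h) (fun _ _ => rfl)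
    (sq_nonneg _) (fun x => by rw [← mul_pow]; gcongr; exact T.le_opNorm x) x

end Operators

end RightCStarModule

variable {A : Type*} [CStarAlgebra A] [PartialOrder A] [StarOrderedRing A]
variable {H : Type*} [NormedAddCommGroup H] [NormedSpace ℂ H] [SMul Aᵐᵒᵖ H] [RightCStarModule A H]
variable {J : Type*} {Hs : J → Type*} [∀ j, NormedAddCommGroup (Hs j)]
  [∀ j, NormedSpace ℂ (Hs j)] [∀ j, SMul Aᵐᵒᵖ (Hs j)] [∀ j, RightCStarModule A (Hs j)]

theorem controlled_g_fusion_frame_comp_left_general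
    (C C' : H →L[ℂ] H) (P : J → H →L[ℂ] H) (Λ : J → H →L[ℂ] H) (v : J → A)
    (a b : ℝ) (ha : 0 < a) (hab : a ≤ b)
    (hsum : ∀ f : H, Summable fun j =>
      v j * v j * (inner A (Λ j (P j (C f))) (Λ j (P j (C' f))) : A))
    (hframe : ∀ f : H,
      a • (inner A f f : A) ≤
        (∑' j, v j * v j * (inner A (Λ j (P j (C f))) (Λ j (P j (C' f))) : A)) ∧
      (∑' j, v j * v j * (inner A (Λ j (P j (C f))) (Λ j (P j (C' f))) : A)) ≤
        b • (inner A f f : A))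
    (θ θad : H →L[ℂ] H)
    (hθad : ∀ x y : H, (inner A (θ x) y : A) = inner A x (θad y))
    (hθΛC : ∀ j, θ.comp ((Λ j).comp ((P j).comp C)) = ((Λ j).comp ((P j).comp C)).comp θ)
    (hθΛC' : ∀ j, θ.comp ((Λ j).comp ((P j).comp C')) = ((Λ j).comp ((P j).comp C')).comp θ)
    (N : H →L[ℂ] H)
    (hN₂ : (θad.comp θ).comp N = ContinuousLinearMap.id ℂ H) :
    ∀ f : H,
      Summable (fun j =>
        v j * v j * (inner A (θ (Λ j (P j (C f)))) (θ (Λ j (P j (C' f)))) : A)) ∧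
      (a * ‖N‖⁻¹) • (inner A f f : A) ≤
        (∑' j, v j * v j * (inner A (θ (Λ j (P j (C f)))) (θ (Λ j (P j (C' f)))) : A)) ∧
      (∑' j, v j * v j * (inner A (θ (Λ j (P j (C f)))) (θ (Λ j (P j (C' f)))) : A)) ≤
        (b * ‖θ‖ ^ 2) • (inner A f f : A) := by
  intro f
  have hθf : ∀ j, θ (Λ j (P j (C f))) = Λ j (P j (C (θ f))) :=
    fun j => DFunLike.congr_fun (hθΛC j) f
  have hθf' : ∀ j, θ (Λ j (P j (C' f))) = Λ j (P j (C' (θ f))) :=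
    fun j => DFunLike.congr_fun (hθΛC' j) f
  have hθN : ∀ x, θad (θ (N x)) = x := fun x => DFunLike.congr_fun hN₂ x
  simp only [hθf, hθf']
  refine ⟨hsum (θ f), ?_, ?_⟩
  · calc (a * ‖N‖⁻¹) • (inner A f f : A) = a • ‖N‖⁻¹ • (inner A f f : A) := mul_smul _ _ _
      _ ≤ a • (inner A (θ f) (θ f) : A) := smul_le_smul_of_nonneg_left
          (RightCStarModule.inv_norm_smul_inner_self_le hθad hθN f) ha.le
      _ ≤ _ := (hframe (θ f)).1
  · calc _ ≤ b • (inner A (θ f) (θ f) : A) := (hframe (θ f)).2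
      _ ≤ b • ‖θ‖ ^ 2 • (inner A f f : A) := smul_le_smul_of_nonneg_left
          (RightCStarModule.inner_self_apply_le_norm_sq_smul hθad f) (ha.le.trans hab)
      _ = (b * ‖θ‖ ^ 2) • (inner A f f : A) := (mul_smul _ _ _).symm

/-- if `Λ_{CC'}` is a `(C,C')`-controlled g-fusion frame with bounds
`A, B` and `θ` is injective with closed range and commutes with each `Λ_jP_{W_j}C`
and `Λ_jP_{W_j}C'`, then `{W_j, θΛ_j, v_j}` is a `(C,C')`-controlled g-fusion frame
with bounds `A‖(θ*θ)⁻¹‖⁻¹` and `B‖θ‖²`. -/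
theorem controlled_g_fusion_frame_comp_left
    (C C' : H →L[ℂ] H) (P : J → H →L[ℂ] H) (Λ : J → H →L[ℂ] H)
    (Λad : J → H →L[ℂ] H) (v : J → A)
    (hΛad : ∀ (j) (x u : H), (inner A (Λ j x) u : A) = inner A x (Λad j u))
    (hP_idem : ∀ j, (P j).comp (P j) = P j)
    (hP_sa : ∀ (j) (f g : H), (inner A (P j f) g : A) = inner A f (P j g))
    (hC_sa : ∀ f g : H, (inner A (C f) g : A) = inner A f (C g))
    (hC'_sa : ∀ f g : H, (inner A (C' f) g : A) = inner A f (C' g))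
    (hC_pos : ∀ f : H, 0 ≤ (inner A (C f) f : A))
    (hC'_pos : ∀ f : H, 0 ≤ (inner A (C' f) f : A))
    (hC_inv : Function.Bijective C) (hC'_inv : Function.Bijective C')
    (hCC' : C.comp C' = C'.comp C)
    (hCT : ∀ j, C.comp ((P j).comp ((Λad j).comp ((Λ j).comp (P j))))
      = ((P j).comp ((Λad j).comp ((Λ j).comp (P j)))).comp C)
    (hC'T : ∀ j, C'.comp ((P j).comp ((Λad j).comp ((Λ j).comp (P j))))
      = ((P j).comp ((Λad j).comp ((Λ j).comp (P j)))).comp C')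
    (hv_pos : ∀ j, 0 ≤ v j) (hv_inv : ∀ j, IsUnit (v j))
    (hv_central : ∀ (j) (a : A), Commute (v j) a)
    (a b : ℝ) (ha : 0 < a) (hab : a ≤ b)
    (hsum : ∀ f : H, Summable fun j =>
      v j * v j * (inner A (Λ j (P j (C f))) (Λ j (P j (C' f))) : A))
    (hframe : ∀ f : H,
      a • (inner A f f : A) ≤
        (∑' j, v j * v j * (inner A (Λ j (P j (C f))) (Λ j (P j (C' f))) : A)) ∧
      (∑' j, v j * v j * (inner A (Λ j (P j (C f))) (Λ j (P j (C' f))) : A)) ≤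
        b • (inner A f f : A))
    (θ θad : H →L[ℂ] H)
    (hθad : ∀ x y : H, (inner A (θ x) y : A) = inner A x (θad y))
    (hθ_inj : Function.Injective θ) (hθ_range : IsClosed (Set.range θ))
    (hθΛC : ∀ j, θ.comp ((Λ j).comp ((P j).comp C)) = ((Λ j).comp ((P j).comp C)).comp θ)
    (hθΛC' : ∀ j, θ.comp ((Λ j).comp ((P j).comp C')) = ((Λ j).comp ((P j).comp C')).comp θ)
    (N : H →L[ℂ] H) (hN₁ : N.comp (θad.comp θ) = ContinuousLinearMap.id ℂ H)
    (hN₂ : (θad.comp θ).comp N = ContinuousLinearMap.id ℂ H) :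
    ∀ f : H,
      Summable (fun j =>
        v j * v j * (inner A (θ (Λ j (P j (C f)))) (θ (Λ j (P j (C' f)))) : A)) ∧
      (a * ‖N‖⁻¹) • (inner A f f : A) ≤
        (∑' j, v j * v j * (inner A (θ (Λ j (P j (C f)))) (θ (Λ j (P j (C' f)))) : A)) ∧
      (∑' j, v j * v j * (inner A (θ (Λ j (P j (C f)))) (θ (Λ j (P j (C' f)))) : A)) ≤
        (b * ‖θ‖ ^ 2) • (inner A f f : A) :=
  controlled_g_fusion_frame_comp_left_general C C' P Λ v a b ha hab hsum hframe θ θad hθad hθΛC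
    hθΛC' N hN₂
end
end

section
/- Let (H, A, ⟨·,·⟩_A) and (H, B, ⟨·,·⟩_B) be Hilbert C*-modules over unital C*-algebras A and B, φ : A → B a *-homomorphism, and θ a surjective map on H with ⟨θf, θg⟩_B = φ(⟨f,g⟩_A) for all f,g ∈ H. If {W_j, Λ_j, v_j} is a (C,C')-controlled g-fusion frame for (H, A) with bounds A and B, and θ commutes with each Λ_j P_{W_j}, with C, and with C', then {W_j, Λ_j, φ(v_j)} is a (C,C')-controlled g-fusion frame for (H, B) with the same bounds A, B, and the frame operators satisfy ⟨S_B θf, θg⟩_B = φ(⟨S_A f, g⟩_A). -/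
open scoped RightActions

noncomputable section

/-- The `CStarModule` class as it stood in the older Mathlib (right action via `Aᵐᵒᵖ`,
inner product linear in the second argument for that right action). -/
class CStarModuleOld (A : outParam <| Type*) (E : Type*) [NonUnitalSemiring A] [StarRing A]
    [Module ℂ A] [AddCommGroup E] [Module ℂ E] [PartialOrder A] [SMul Aᵐᵒᵖ E] [Norm A] [Norm E]
    extends Inner A E where
  inner_add_right {x} {y} {z} : inner x (y + z) = inner x y + inner x z
  inner_self_nonneg {x} : 0 ≤ inner x x
  inner_self {x} : inner x x = 0 ↔ x = 0
  inner_op_smul_right {a : A} {x y : E} : inner x (y <• a) = inner x y * a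
  inner_smul_right_complex {z : ℂ} {x} {y} : inner x (z • y) = z • inner x y
  star_inner x y : star (inner x y) = inner y x
  norm_eq_sqrt_norm_inner_self x : ‖x‖ = √‖inner x x‖

/-! Since `φ` is a continuous, order-preserving `*`-homomorphism and `θ` turns the `B`-valued
inner product into `φ` of the `A`-valued one, each term of the `B`-frame sum at `(θ f, θ g)` is `φ`
of the corresponding `A`-term; so `φ` carries the `A`-sums, together with their frame bounds, to
the `B`-sums, and surjectivity of `θ` reaches every vector of `H`. The off-diagonal `A`-sums are
summable because the frame terms are sesquilinear in `(f, g)`, and polarization recovers a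
sesquilinear form from its diagonal. -/

open scoped CStarAlgebra

namespace LinearMap

variable {M N : Type*} [AddCommGroup M] [Module ℂ M] [AddCommGroup N] [Module ℂ N]

theorem four_smul_eq_polarization (s : M →ₗ⋆[ℂ] M →ₗ[ℂ] N) (x y : M) :
    (4 : ℂ) • s x y = s (x + y) (x + y) - s (x - y) (x - y)
      - Complex.I • s (x + Complex.I • y) (x + Complex.I • y)
      + Complex.I • s (x - Complex.I • y) (x - Complex.I • y) := by
  simp only [map_add, map_sub, map_smulₛₗ, add_apply, sub_apply, neg_apply, smul_apply,
    Complex.conj_I, RingHom.id_apply, smul_add, smul_sub, smul_smul, neg_smul]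
  match_scalars <;> ring_nf <;> simp only [Complex.I_sq] <;> norm_num

theorem summable_of_summable_diag {J : Type*} [TopologicalSpace N] [IsTopologicalAddGroup N]
    [ContinuousConstSMul ℂ N] {s : J → M →ₗ⋆[ℂ] M →ₗ[ℂ] N}
    (h : ∀ x, Summable fun j => s j x x) (x y : M) : Summable fun j => s j x y := by
  have hpol := (((h (x + y)).sub (h (x - y))).sub ((h (x + Complex.I • y)).const_smul Complex.I)
    |>.add ((h (x - Complex.I • y)).const_smul Complex.I)).const_smul (4 : ℂ)⁻¹
  refine hpol.congr fun j => ?_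
  rw [← four_smul_eq_polarization, smul_smul, inv_mul_cancel₀ (by norm_num : (4 : ℂ) ≠ 0),
    one_smul]

end LinearMap

namespace CStarModuleOld

variable {A E : Type*} [CStarAlgebra A] [PartialOrder A] [NormedAddCommGroup E] [NormedSpace ℂ E]
  [SMul Aᵐᵒᵖ E]

theorem inner_add_left [CStarModuleOld A E] (x y z : E) :
    inner A (x + y) z = inner A x z + inner A y z := by
  rw [← star_inner, inner_add_right, star_add, star_inner, star_inner]

theorem inner_smul_left_complex [CStarModuleOld A E] (c : ℂ) (x y : E) :
    inner A (c • x) y = star c • inner A x y := by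
  rw [← star_inner, inner_smul_right_complex, star_smul, star_inner]

variable (A E) in
def innerₛₗ [CStarModuleOld A E] : E →ₗ⋆[ℂ] E →ₗ[ℂ] A :=
  LinearMap.mk₂'ₛₗ _ _ (fun x y => inner A x y) inner_add_left inner_smul_left_complex
    (fun _ _ _ => inner_add_right) (fun _ _ _ => inner_smul_right_complex)

/- `A` is an `outParam` of `CStarModuleOld`, so when `E` carries module structures over several
algebras instance search may not find this one; it is read off `h` by unification instead. -/
theorem summable_mul_inner_of_summable_diag {_ : CStarModuleOld A E} {J : Type*} (w : J → A)
    (T T' : J → E →ₗ[ℂ] E) (h : ∀ x, Summable fun j => w j * inner A (T j x) (T' j x))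
    (x y : E) : Summable fun j => w j * inner A (T j x) (T' j y) :=
  LinearMap.summable_of_summable_diag
    (s := fun j => (((innerₛₗ A E).compl₂ (T' j)).comp (T j)).compr₂ₛₗ (LinearMap.mulLeft ℂ (w j)))
    h x y

end CStarModuleOld

section Transport

variable {A B H : Type*} [CStarAlgebra A] [PartialOrder A] [CStarAlgebra B] [PartialOrder B]
  [NormedAddCommGroup H] [NormedSpace ℂ H] [SMul Aᵐᵒᵖ H] [SMul Bᵐᵒᵖ H]
  {_ : CStarModuleOld A H} {_ : CStarModuleOld B H}

theorem hasSum_map_mul_inner {J : Type*} {φ : A →⋆ₐ[ℂ] B} {θ : H → H}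
    (hθφ : ∀ f g : H, inner B (θ f) (θ g) = φ (inner A f g))
    {v : J → A} {T T' : J → H → H} (hT : ∀ j f, θ (T j f) = T j (θ f))
    (hT' : ∀ j f, θ (T' j f) = T' j (θ f)) {f g : H}
    (hs : Summable fun j => v j * v j * inner A (T j f) (T' j g)) :
    HasSum (fun j => φ (v j) * φ (v j) * inner B (T j (θ f)) (T' j (θ g)))
      (φ (∑' j, v j * v j * inner A (T j f) (T' j g))) := by
  have hterm : ∀ j, φ (v j) * φ (v j) * inner B (T j (θ f)) (T' j (θ g)) =
      φ (v j * v j * inner A (T j f) (T' j g)) := fun j => by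
    rw [← hT, ← hT', hθφ, map_mul, map_mul]
  convert hs.hasSum.map φ (map_continuous φ) using 1
  exact funext hterm

end Transport

/-- transporting a `(C,C')`-controlled g-fusion frame along a surjective
map `θ` compatible with a `*`-homomorphism `φ : A → B` of C*-algebras: `{W_j, Λ_j, φ(v_j)}`
is a `(C,C')`-controlled g-fusion frame for the `B`-module structure with the same bounds,
and `⟨S_B θf, θg⟩_B = φ(⟨S_A f, g⟩_A)`. -/
theorem controlled_g_fusion_frame_star_hom_transport
    {A B : Type*} [CStarAlgebra A] [PartialOrder A] [StarOrderedRing A]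
    [CStarAlgebra B] [PartialOrder B] [StarOrderedRing B]
    {H : Type*} [NormedAddCommGroup H] [NormedSpace ℂ H] [SMul Aᵐᵒᵖ H] [SMul Bᵐᵒᵖ H]
    [CStarModuleOld A H] [CStarModuleOld B H]
    {J : Type*}
    (C C' : H →L[ℂ] H) (P : J → H →L[ℂ] H) (Λ : J → H →L[ℂ] H)
    (Λad : J → H →L[ℂ] H) (v : J → A)
    (hΛad : ∀ (j) (x u : H), (inner A (Λ j x) u : A) = inner A x (Λad j u))
    (hP_idem : ∀ j, (P j).comp (P j) = P j)
    (hP_sa : ∀ (j) (f g : H), (inner A (P j f) g : A) = inner A f (P j g))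
    (hC_sa : ∀ f g : H, (inner A (C f) g : A) = inner A f (C g))
    (hC'_sa : ∀ f g : H, (inner A (C' f) g : A) = inner A f (C' g))
    (hC_pos : ∀ f : H, 0 ≤ (inner A (C f) f : A))
    (hC'_pos : ∀ f : H, 0 ≤ (inner A (C' f) f : A))
    (hC_inv : Function.Bijective C) (hC'_inv : Function.Bijective C')
    (hCC' : C.comp C' = C'.comp C)
    (hCT : ∀ j, C.comp ((P j).comp ((Λad j).comp ((Λ j).comp (P j))))
      = ((P j).comp ((Λad j).comp ((Λ j).comp (P j)))).comp C)
    (hC'T : ∀ j, C'.comp ((P j).comp ((Λad j).comp ((Λ j).comp (P j))))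
      = ((P j).comp ((Λad j).comp ((Λ j).comp (P j)))).comp C')
    (hv_pos : ∀ j, 0 ≤ v j) (hv_inv : ∀ j, IsUnit (v j))
    (hv_central : ∀ (j) (a : A), Commute (v j) a)
    (a b : ℝ) (ha : 0 < a) (hab : a ≤ b)
    (hsumA : ∀ f : H, Summable fun j =>
      v j * v j * (inner A (Λ j (P j (C f))) (Λ j (P j (C' f))) : A))
    (hframe : ∀ f : H,
      a • (inner A f f : A) ≤
        (∑' j, v j * v j * (inner A (Λ j (P j (C f))) (Λ j (P j (C' f))) : A)) ∧
      (∑' j, v j * v j * (inner A (Λ j (P j (C f))) (Λ j (P j (C' f))) : A)) ≤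
        b • (inner A f f : A))
    (φ : A →⋆ₐ[ℂ] B) (θ : H → H) (hθ_surj : Function.Surjective θ)
    (hθφ : ∀ f g : H, (inner B (θ f) (θ g) : B) = φ ((inner A f g : A)))
    (hθΛP : ∀ (j) (f : H), θ (Λ j (P j f)) = Λ j (P j (θ f)))
    (hθC : ∀ f : H, θ (C f) = C (θ f)) (hθC' : ∀ f : H, θ (C' f) = C' (θ f))
    (SA SB : H →L[ℂ] H)
    (hSA : ∀ f g : H, (inner A (SA f) g : A) =
      ∑' j, v j * v j * (inner A (Λ j (P j (C f))) (Λ j (P j (C' g))) : A))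
    (hSB : ∀ f g : H, (inner B (SB f) g : B) =
      ∑' j, φ (v j) * φ (v j) * (inner B (Λ j (P j (C f))) (Λ j (P j (C' g))) : B)) :
    (∀ g : H,
      Summable (fun j =>
        φ (v j) * φ (v j) * (inner B (Λ j (P j (C g))) (Λ j (P j (C' g))) : B)) ∧
      a • (inner B g g : B) ≤
        (∑' j, φ (v j) * φ (v j) * (inner B (Λ j (P j (C g))) (Λ j (P j (C' g))) : B)) ∧
      (∑' j, φ (v j) * φ (v j) * (inner B (Λ j (P j (C g))) (Λ j (P j (C' g))) : B)) ≤
        b • (inner B g g : B)) ∧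
    (∀ f g : H, (inner B (SB (θ f)) (θ g) : B) = φ ((inner A (SA f) g : A))) := by
  have hsum_mixed : ∀ f g : H, Summable fun j =>
      v j * v j * (inner A (Λ j (P j (C f))) (Λ j (P j (C' g))) : A) :=
    CStarModuleOld.summable_mul_inner_of_summable_diag (fun j => v j * v j)
      (fun j => (Λ j ∘L P j ∘L C).toLinearMap) (fun j => (Λ j ∘L P j ∘L C').toLinearMap) hsumA
  have htransport : ∀ f g : H,
      HasSum (fun j => φ (v j) * φ (v j) * inner B (Λ j (P j (C (θ f)))) (Λ j (P j (C' (θ g)))))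
        (φ (∑' j, v j * v j * (inner A (Λ j (P j (C f))) (Λ j (P j (C' g))) : A))) :=
    fun f g => hasSum_map_mul_inner hθφ (T := fun j f => Λ j (P j (C f)))
      (T' := fun j f => Λ j (P j (C' f))) (fun j f => by rw [hθΛP, hθC])
      (fun j f => by rw [hθΛP, hθC']) (hsum_mixed f g)
  refine ⟨fun g => ?_, fun f g => by rw [hSB, hSA, (htransport f g).tsum_eq]⟩
  obtain ⟨f, rfl⟩ := hθ_surj g
  rw [(htransport f f).tsum_eq, hθφ, ← map_real_smul φ (map_continuous φ),
    ← map_real_smul φ (map_continuous φ)]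
  exact ⟨(htransport f f).summable, OrderHomClass.mono φ (hframe f).1,
    OrderHomClass.mono φ (hframe f).2⟩
end
end

section
/- Perturbation theorem: Let Λ_{CC'} = {W_j, Λ_j, v_j} be a (C,C')-controlled K-g-fusion frame for H with bounds A, B, and let Γ_j ∈ End*_A(H,H_j), with weights u_j and submodules V_j. Suppose there exist 0 < λ₁, λ₂ < 1 and ε > 0 with ε < (1−λ₁)√A such that for every f ∈ H, ‖((v_jΛ_jP_{W_j} − u_jΓ_jP_{V_j})(CC')^{1/2}f)_j‖ ≤ λ₁‖(v_jΛ_jP_{W_j}(CC')^{1/2}f)_j‖ + λ₂‖(u_jΓ_jP_{V_j}(CC')^{1/2}f)_j‖ + ε‖K*f‖ (norms in ℓ²({H_j})). Then {V_j, Γ_j, u_j} is a (C,C')-controlled K-g-fusion frame for H with bounds ((1−λ₁)√A − ε)²/(1+λ₂)² and ((λ₁+1)√B + ε‖K‖)²/(1−λ₂)². -/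
/-!
Write `‖·‖` for the norm of the Hilbert `A`-module `ℓ²(H_j)`, and `Λf`, `Γf` for the sequences
`(v_j Λ_j P_{W_j} R f)_j` and `(u_j Γ_j P_{V_j} R f)_j`, where `R = (CC')^{1/2}`. The triangle
inequality gives `‖Λf‖ ≤ ‖Γf‖ + ‖Λf - Γf‖` and `‖Γf‖ ≤ ‖Λf‖ + ‖Λf - Γf‖`; bounding `‖Λf - Γf‖` by the
perturbation hypothesis, `‖Λf‖` by the frame bounds of `Λ` and `‖K*f‖` by `‖K‖ ‖f‖`, and solving
for `‖Γf‖` yields the frame bounds of `Γ`. The triangle inequality in `ℓ²` is the one of the finite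
sums `C⋆ᵐᵒᵈ(A, Π i : s, E i)` passed to the limit; the same finite inequality shows, through the
Cauchy criterion, that `ℓ²` is closed under addition.
-/

open scoped RightActions

noncomputable section

variable {A : Type*} [CStarAlgebra A] [PartialOrder A] [StarOrderedRing A]
variable {H : Type*} [NormedAddCommGroup H] [NormedSpace ℂ H] [SMul Aᵐᵒᵖ H] [CStarModuleRight A H]
variable {J : Type*} {Hs : J → Type*} [∀ j, NormedAddCommGroup (Hs j)]
  [∀ j, NormedSpace ℂ (Hs j)] [∀ j, SMul Aᵐᵒᵖ (Hs j)] [∀ j, CStarModuleRight A (Hs j)]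

open scoped InnerProductSpace WithCStarModule

/-- A right Hilbert module seen as a left one (Mathlib's `CStarModule`): `a • x := x <• star a`,
with the arguments of the inner product swapped. -/
def CStarModuleRight.ToLeft (E : Type*) := E

namespace CStarModuleRight

variable {A : Type*} [NonUnitalCStarAlgebra A] [PartialOrder A]
variable {E : Type*} [NormedAddCommGroup E] [Module ℂ E] [SMul Aᵐᵒᵖ E] [CStarModuleRight A E]

lemma inner_add_left (x y z : E) : (inner A (x + y) z : A) = inner A x z + inner A y z := by
  rw [← star_inner z (x + y), inner_add_right, star_add, star_inner, star_inner]

lemma inner_op_smul_star_left (a : A) (x y : E) :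
    (inner A (y <• star a) x : A) = a * inner A y x := by
  rw [← star_inner x, inner_op_smul_right, star_mul, star_star, star_inner]

lemma inner_conj_smul_left (z : ℂ) (x y : E) :
    (inner A ((starRingEnd ℂ z) • y) x : A) = z • inner A y x := by
  rw [← star_inner x, inner_smul_right_complex, star_smul, star_inner]
  simp

instance : NormedAddCommGroup (ToLeft E) := inferInstanceAs (NormedAddCommGroup E)

instance : Module ℂ (ToLeft E) := Module.compHom E (starRingEnd ℂ)

instance : SMul A (ToLeft E) := ⟨fun a x => (show E from x) <• star a⟩

instance : CStarModule A (ToLeft E) where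
  inner x y := inner A (show E from y) (show E from x)
  inner_add_right {x y z} := inner_add_left (A := A) (E := E) y z x
  inner_self_nonneg {x} := inner_self_nonneg (A := A) (E := E) (x := x)
  inner_self {x} := inner_self (A := A) (E := E) (x := x)
  inner_op_smul_right {a x y} := inner_op_smul_star_left (A := A) (E := E) a x y
  inner_smul_right_complex {z x y} := inner_conj_smul_left (A := A) (E := E) z x y
  star_inner x y := star_inner (A := A) (E := E) y x
  norm_eq_sqrt_norm_inner_self x := norm_eq_sqrt_norm_inner_self (A := A) (E := E) x

end CStarModuleRight

namespace CStarModule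

variable {A : Type*} [NonUnitalCStarAlgebra A] [PartialOrder A]
variable {ι : Type*} {E : ι → Type*} [∀ i, NormedAddCommGroup (E i)] [∀ i, Module ℂ (E i)]
  [∀ i, SMul A (E i)] [∀ i, CStarModule A (E i)]

variable (A) in
def Memℓ2 (g : ∀ i, E i) : Prop := Summable fun i => ⟪g i, g i⟫_A

variable (A) in
/-- The norm of the Hilbert `A`-module `ℓ²(E)`; it is `0` on sequences outside `ℓ²(E)`. -/
def ℓ2Norm (g : ∀ i, E i) : ℝ := √‖∑' i, ⟪g i, g i⟫_A‖

lemma Memℓ2.neg {g : ∀ i, E i} (hg : Memℓ2 A g) : Memℓ2 A (-g) := by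
  simpa [Memℓ2] using hg

lemma ℓ2Norm_neg (g : ∀ i, E i) : ℓ2Norm A (-g) = ℓ2Norm A g := by
  simp [ℓ2Norm]

lemma ℓ2Norm_sub_comm (g h : ∀ i, E i) : ℓ2Norm A (g - h) = ℓ2Norm A (h - g) := by
  rw [← neg_sub, ℓ2Norm_neg]

variable [StarOrderedRing A]

lemma sqrt_norm_sum_inner_self_add_le (s : Finset ι) (g h : ∀ i, E i) :
    √‖∑ i ∈ s, ⟪g i + h i, g i + h i⟫_A‖ ≤
      √‖∑ i ∈ s, ⟪g i, g i⟫_A‖ + √‖∑ i ∈ s, ⟪h i, h i⟫_A‖ := by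
  let restrict : (∀ i, E i) → C⋆ᵐᵒᵈ(A, Π i : s, E i) :=
    fun g => (WithCStarModule.equiv _ _).symm fun i => g i
  have norm_restrict (g : ∀ i, E i) : ‖restrict g‖ = √‖∑ i ∈ s, ⟪g i, g i⟫_A‖ := by
    rw [WithCStarModule.pi_norm, ← Finset.sum_coe_sort s]
    rfl
  calc √‖∑ i ∈ s, ⟪g i + h i, g i + h i⟫_A‖ = ‖restrict g + restrict h‖ := (norm_restrict _).symm
    _ ≤ ‖restrict g‖ + ‖restrict h‖ := norm_add_le (restrict g) (restrict h)
    _ = _ := by rw [norm_restrict, norm_restrict]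

lemma sqrt_norm_sum_inner_self_le_ℓ2Norm {g : ∀ i, E i} (hg : Memℓ2 A g) (s : Finset ι) :
    √‖∑ i ∈ s, ⟪g i, g i⟫_A‖ ≤ ℓ2Norm A g :=
  Real.sqrt_le_sqrt <| CStarAlgebra.norm_le_norm_of_nonneg_of_le
    (Finset.sum_nonneg fun _ _ => inner_self_nonneg) (hg.sum_le_tsum s fun _ _ => inner_self_nonneg)

lemma Memℓ2.add {g h : ∀ i, E i} (hg : Memℓ2 A g) (hh : Memℓ2 A h) : Memℓ2 A (g + h) := by
  classical
  rw [Memℓ2, summable_iff_vanishing_norm] at *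
  intro δ hδ
  have hδ' : 0 < √δ / 2 := by positivity
  obtain ⟨s, hs⟩ := hg (δ / 4) (by positivity)
  obtain ⟨s', hs'⟩ := hh (δ / 4) (by positivity)
  refine ⟨s ∪ s', fun t ht => ?_⟩
  have small {k : ∀ i, E i} {u : Finset ι}
      (hk : ∀ t, Disjoint t u → ‖∑ i ∈ t, ⟪k i, k i⟫_A‖ < δ / 4) (htu : Disjoint t u) :
      √‖∑ i ∈ t, ⟪k i, k i⟫_A‖ < √δ / 2 := by
    rw [Real.sqrt_lt' hδ', div_pow, Real.sq_sqrt hδ.le]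
    linarith [hk t htu]
  have hsum : √‖∑ i ∈ t, ⟪(g + h) i, (g + h) i⟫_A‖ < √δ :=
    (sqrt_norm_sum_inner_self_add_le t g h).trans_lt <| by
      linarith [small hs (Finset.disjoint_union_right.mp ht).1,
        small hs' (Finset.disjoint_union_right.mp ht).2]
  rwa [Real.sqrt_lt_sqrt_iff (norm_nonneg _)] at hsum

lemma Memℓ2.sub {g h : ∀ i, E i} (hg : Memℓ2 A g) (hh : Memℓ2 A h) : Memℓ2 A (g - h) := by
  simpa only [sub_eq_add_neg] using hg.add hh.neg

lemma ℓ2Norm_add_le {g h : ∀ i, E i} (hg : Memℓ2 A g) (hh : Memℓ2 A h) :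
    ℓ2Norm A (g + h) ≤ ℓ2Norm A g + ℓ2Norm A h := by
  have hpartial (s : Finset ι) :
      ‖∑ i ∈ s, ⟪(g + h) i, (g + h) i⟫_A‖ ≤ (ℓ2Norm A g + ℓ2Norm A h) ^ 2 :=
    (Real.sqrt_le_iff.mp <| (sqrt_norm_sum_inner_self_add_le s g h).trans <|
      add_le_add (sqrt_norm_sum_inner_self_le_ℓ2Norm hg s)
        (sqrt_norm_sum_inner_self_le_ℓ2Norm hh s)).2
  refine Real.sqrt_le_iff.mpr ⟨add_nonneg (Real.sqrt_nonneg _) (Real.sqrt_nonneg _), ?_⟩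
  exact le_of_tendsto (hg.add hh).hasSum.norm (Filter.Eventually.of_forall hpartial)

lemma ℓ2Norm_le_add_ℓ2Norm_sub {g h : ∀ i, E i} (hg : Memℓ2 A g) (hh : Memℓ2 A h) :
    ℓ2Norm A g ≤ ℓ2Norm A h + ℓ2Norm A (g - h) := by
  simpa using ℓ2Norm_add_le hh (hg.sub hh)

lemma norm_apply_le_of_adjoint {E F : Type*} [NormedAddCommGroup E] [Module ℂ E] [SMul A E]
    [CStarModule A E] [NormedAddCommGroup F] [Module ℂ F] [SMul A F] [CStarModule A F]
    {T : E → F} {S : F → E} {M : ℝ} (hTS : ∀ x y, ⟪T x, y⟫_A = ⟪x, S y⟫_A) (hM : 0 ≤ M)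
    (hS : ∀ y, ‖S y‖ ≤ M * ‖y‖) (x : E) : ‖T x‖ ≤ M * ‖x‖ := by
  have hsq : ‖T x‖ * ‖T x‖ ≤ (M * ‖x‖) * ‖T x‖ :=
    calc ‖T x‖ * ‖T x‖ = ‖⟪x, S (T x)⟫_A‖ := by rw [← hTS, ← sq, norm_sq_eq A]
      _ ≤ ‖x‖ * ‖S (T x)‖ := norm_inner_le E
      _ ≤ ‖x‖ * (M * ‖T x‖) := by gcongr; exact hS _
      _ = (M * ‖x‖) * ‖T x‖ := by ring
  rcases (norm_nonneg (T x)).eq_or_lt with h0 | hpos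
  · rw [← h0]; positivity
  · exact le_of_mul_le_mul_right hsq hpos

end CStarModule

lemma lower_frame_bound_of_perturbation {X Y D t a lam₁ lam₂ ε : ℝ} (hY : 0 ≤ Y) (ht : 0 ≤ t)
    (hlam₁ : lam₁ ≤ 1) (hlam₂ : 0 < 1 + lam₂) (hε : ε ≤ (1 - lam₁) * √a)
    (htri : √X ≤ √Y + D) (hD : D ≤ lam₁ * √X + lam₂ * √Y + ε * t) (hframe : a * t ^ 2 ≤ X) :
    ((1 - lam₁) * √a - ε) ^ 2 / (1 + lam₂) ^ 2 * t ^ 2 ≤ Y := by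
  have hX : √a * t ≤ √X := by
    simpa [Real.sqrt_mul' a (sq_nonneg t), Real.sqrt_sq ht] using Real.sqrt_le_sqrt hframe
  have hlin : ((1 - lam₁) * √a - ε) * t ≤ (1 + lam₂) * √Y := by
    linarith [mul_le_mul_of_nonneg_left hX (sub_nonneg.mpr hlam₁)]
  have hsq := pow_le_pow_left₀ (mul_nonneg (sub_nonneg.mpr hε) ht) hlin 2
  rw [div_mul_eq_mul_div, div_le_iff₀ (by positivity), ← Real.sq_sqrt hY]
  linarith

lemma upper_frame_bound_of_perturbation {X Y D t n b k lam₁ lam₂ ε : ℝ} (hY : 0 ≤ Y) (hn : 0 ≤ n)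
    (hlam₁ : 0 ≤ lam₁ + 1) (hlam₂ : lam₂ < 1) (hε : 0 ≤ ε)
    (htri : √Y ≤ √X + D) (hD : D ≤ lam₁ * √X + lam₂ * √Y + ε * t) (hframe : X ≤ b * n ^ 2)
    (hK : t ≤ k * n) :
    Y ≤ ((lam₁ + 1) * √b + ε * k) ^ 2 / (1 - lam₂) ^ 2 * n ^ 2 := by
  have hX : √X ≤ √b * n := by
    simpa [Real.sqrt_mul' b (sq_nonneg n), Real.sqrt_sq hn] using Real.sqrt_le_sqrt hframe
  have hlin : (1 - lam₂) * √Y ≤ ((lam₁ + 1) * √b + ε * k) * n := by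
    linarith [mul_le_mul_of_nonneg_left hX hlam₁, mul_le_mul_of_nonneg_left hK hε]
  have hsq := pow_le_pow_left₀ (mul_nonneg (sub_nonneg.mpr hlam₂.le) (Real.sqrt_nonneg Y)) hlin 2
  rw [div_mul_eq_mul_div, le_div_iff₀ (pow_pos (sub_pos.mpr hlam₂) 2), ← Real.sq_sqrt hY]
  linarith

open CStarModule CStarModuleRight

theorem controlled_K_g_fusion_frame_perturbation_general
    (P : J → H →L[ℂ] H) (Λ : ∀ j, H →L[ℂ] Hs j) (v : J → A)
    (K Kad : H →L[ℂ] H)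
    (hKad : ∀ x y : H, (inner A (K x) y : A) = inner A x (Kad y))
    (Γ : ∀ j, H →L[ℂ] Hs j)
    (P' : J → H →L[ℂ] H) (u : J → A)
    (R : H →L[ℂ] H)
    (a b : ℝ)
    (hsumΛ : ∀ f : H, Summable fun j =>
      (inner A ((Λ j (P j (R f))) <• (v j)) ((Λ j (P j (R f))) <• (v j)) : A))
    (hsumΓ : ∀ f : H, Summable fun j =>
      (inner A ((Γ j (P' j (R f))) <• (u j)) ((Γ j (P' j (R f))) <• (u j)) : A))
    (hframeΛ : ∀ f : H,
      a * ‖Kad f‖ ^ 2 ≤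
        ‖∑' j, (inner A ((Λ j (P j (R f))) <• (v j)) ((Λ j (P j (R f))) <• (v j)) : A)‖ ∧
      ‖∑' j, (inner A ((Λ j (P j (R f))) <• (v j)) ((Λ j (P j (R f))) <• (v j)) : A)‖ ≤
        b * ‖f‖ ^ 2)
    (lam₁ lam₂ ε : ℝ)
    (hlam₁ : 0 < lam₁) (hlam₁' : lam₁ < 1) (hlam₂ : 0 < lam₂) (hlam₂' : lam₂ < 1)
    (hε : 0 < ε) (hε' : ε < (1 - lam₁) * Real.sqrt a)
    (hpert : ∀ f : H,
      Real.sqrt ‖∑' j,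
        (inner A ((Λ j (P j (R f))) <• (v j) - (Γ j (P' j (R f))) <• (u j))
          ((Λ j (P j (R f))) <• (v j) - (Γ j (P' j (R f))) <• (u j)) : A)‖ ≤
      lam₁ * Real.sqrt
        ‖∑' j, (inner A ((Λ j (P j (R f))) <• (v j)) ((Λ j (P j (R f))) <• (v j)) : A)‖ +
      lam₂ * Real.sqrt
        ‖∑' j, (inner A ((Γ j (P' j (R f))) <• (u j)) ((Γ j (P' j (R f))) <• (u j)) : A)‖ +
      ε * ‖Kad f‖) :
    ∀ f : H,
      ((1 - lam₁) * Real.sqrt a - ε) ^ 2 / (1 + lam₂) ^ 2 * ‖Kad f‖ ^ 2 ≤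
        ‖∑' j, (inner A ((Γ j (P' j (R f))) <• (u j)) ((Γ j (P' j (R f))) <• (u j)) : A)‖ ∧
      ‖∑' j, (inner A ((Γ j (P' j (R f))) <• (u j)) ((Γ j (P' j (R f))) <• (u j)) : A)‖ ≤
        ((lam₁ + 1) * Real.sqrt b + ε * ‖K‖) ^ 2 / (1 - lam₂) ^ 2 * ‖f‖ ^ 2 := by
  intro f
  let gΛ : ∀ j, ToLeft (Hs j) := fun j => Λ j (P j (R f)) <• v j
  let gΓ : ∀ j, ToLeft (Hs j) := fun j => Γ j (P' j (R f)) <• u j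
  have hΛ : Memℓ2 A gΛ := hsumΛ f
  have hΓ : Memℓ2 A gΓ := hsumΓ f
  have hΛΓ : ℓ2Norm A gΛ ≤ ℓ2Norm A gΓ + ℓ2Norm A (gΛ - gΓ) := ℓ2Norm_le_add_ℓ2Norm_sub hΛ hΓ
  have hΓΛ : ℓ2Norm A gΓ ≤ ℓ2Norm A gΛ + ℓ2Norm A (gΛ - gΓ) := by
    rw [ℓ2Norm_sub_comm]
    exact ℓ2Norm_le_add_ℓ2Norm_sub hΓ hΛ
  have hK : ‖Kad f‖ ≤ ‖K‖ * ‖f‖ :=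
    norm_apply_le_of_adjoint (E := ToLeft H) (F := ToLeft H) (fun x y => (hKad y x).symm)
      (norm_nonneg K) K.le_opNorm f
  -- read in `ToLeft`, `hpert f` and `hframeΛ f` unfold to statements about the `ℓ2Norm`s above
  exact ⟨lower_frame_bound_of_perturbation (norm_nonneg _) (norm_nonneg _) hlam₁'.le
      (by linarith) hε'.le hΛΓ (hpert f) (hframeΛ f).1,
    upper_frame_bound_of_perturbation (norm_nonneg _) (norm_nonneg _) (by linarith) hlam₂'
      hε.le hΓΛ (hpert f) (hframeΛ f).2 hK⟩

/-- perturbation of `(C,C')`-controlled `K`-g-fusion frames. -/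
theorem controlled_K_g_fusion_frame_perturbation
    (C C' : H →L[ℂ] H) (P : J → H →L[ℂ] H) (Λ : ∀ j, H →L[ℂ] Hs j)
    (Λad : ∀ j, Hs j →L[ℂ] H) (v : J → A)
    (hΛad : ∀ (j) (x : H) (u : Hs j), (inner A (Λ j x) u : A) = inner A x (Λad j u))
    (hP_idem : ∀ j, (P j).comp (P j) = P j)
    (hP_sa : ∀ (j) (f g : H), (inner A (P j f) g : A) = inner A f (P j g))
    (hC_sa : ∀ f g : H, (inner A (C f) g : A) = inner A f (C g))
    (hC'_sa : ∀ f g : H, (inner A (C' f) g : A) = inner A f (C' g))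
    (hC_pos : ∀ f : H, 0 ≤ (inner A (C f) f : A))
    (hC'_pos : ∀ f : H, 0 ≤ (inner A (C' f) f : A))
    (hC_inv : Function.Bijective C) (hC'_inv : Function.Bijective C')
    (hCC' : C.comp C' = C'.comp C)
    (hCT : ∀ j, C.comp ((P j).comp ((Λad j).comp ((Λ j).comp (P j))))
      = ((P j).comp ((Λad j).comp ((Λ j).comp (P j)))).comp C)
    (hC'T : ∀ j, C'.comp ((P j).comp ((Λad j).comp ((Λ j).comp (P j))))
      = ((P j).comp ((Λad j).comp ((Λ j).comp (P j)))).comp C')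
    (hv_pos : ∀ j, 0 ≤ v j) (hv_inv : ∀ j, IsUnit (v j))
    (hv_central : ∀ (j) (a : A), Commute (v j) a)
    (K Kad : H →L[ℂ] H)
    (hKad : ∀ x y : H, (inner A (K x) y : A) = inner A x (Kad y))
    (Γ : ∀ j, H →L[ℂ] Hs j) (Γad : ∀ j, Hs j →L[ℂ] H)
    (P' : J → H →L[ℂ] H) (u : J → A)
    (hΓad : ∀ (j) (x : H) (w : Hs j), (inner A (Γ j x) w : A) = inner A x (Γad j w))
    (hP'_idem : ∀ j, (P' j).comp (P' j) = P' j)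
    (hP'_sa : ∀ (j) (f g : H), (inner A (P' j f) g : A) = inner A f (P' j g))
    (hu_pos : ∀ j, 0 ≤ u j) (hu_inv : ∀ j, IsUnit (u j))
    (hu_central : ∀ (j) (a : A), Commute (u j) a)
    (hC'T₂ : ∀ j, C.comp ((P' j).comp ((Γad j).comp ((Γ j).comp (P' j))))
      = ((P' j).comp ((Γad j).comp ((Γ j).comp (P' j)))).comp C)
    (hC'T₃ : ∀ j, C'.comp ((P' j).comp ((Γad j).comp ((Γ j).comp (P' j))))
      = ((P' j).comp ((Γad j).comp ((Γ j).comp (P' j)))).comp C')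
    (R : H →L[ℂ] H) (hR : R.comp R = C.comp C')
    (hR_sa : ∀ f g : H, (inner A (R f) g : A) = inner A f (R g))
    (hR_pos : ∀ f : H, 0 ≤ (inner A (R f) f : A))
    (a b : ℝ) (ha : 0 < a) (hab : a ≤ b)
    (hsumΛ : ∀ f : H, Summable fun j =>
      (inner A ((Λ j (P j (R f))) <• (v j)) ((Λ j (P j (R f))) <• (v j)) : A))
    (hsumΓ : ∀ f : H, Summable fun j =>
      (inner A ((Γ j (P' j (R f))) <• (u j)) ((Γ j (P' j (R f))) <• (u j)) : A))
    (hsumD : ∀ f : H, Summable fun j =>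
      (inner A ((Λ j (P j (R f))) <• (v j) - (Γ j (P' j (R f))) <• (u j))
        ((Λ j (P j (R f))) <• (v j) - (Γ j (P' j (R f))) <• (u j)) : A))
    (hframeΛ : ∀ f : H,
      a * ‖Kad f‖ ^ 2 ≤
        ‖∑' j, (inner A ((Λ j (P j (R f))) <• (v j)) ((Λ j (P j (R f))) <• (v j)) : A)‖ ∧
      ‖∑' j, (inner A ((Λ j (P j (R f))) <• (v j)) ((Λ j (P j (R f))) <• (v j)) : A)‖ ≤
        b * ‖f‖ ^ 2)
    (lam₁ lam₂ ε : ℝ)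
    (hlam₁ : 0 < lam₁) (hlam₁' : lam₁ < 1) (hlam₂ : 0 < lam₂) (hlam₂' : lam₂ < 1)
    (hε : 0 < ε) (hε' : ε < (1 - lam₁) * Real.sqrt a)
    (hpert : ∀ f : H,
      Real.sqrt ‖∑' j,
        (inner A ((Λ j (P j (R f))) <• (v j) - (Γ j (P' j (R f))) <• (u j))
          ((Λ j (P j (R f))) <• (v j) - (Γ j (P' j (R f))) <• (u j)) : A)‖ ≤
      lam₁ * Real.sqrt
        ‖∑' j, (inner A ((Λ j (P j (R f))) <• (v j)) ((Λ j (P j (R f))) <• (v j)) : A)‖ +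
      lam₂ * Real.sqrt
        ‖∑' j, (inner A ((Γ j (P' j (R f))) <• (u j)) ((Γ j (P' j (R f))) <• (u j)) : A)‖ +
      ε * ‖Kad f‖) :
    ∀ f : H,
      ((1 - lam₁) * Real.sqrt a - ε) ^ 2 / (1 + lam₂) ^ 2 * ‖Kad f‖ ^ 2 ≤
        ‖∑' j, (inner A ((Γ j (P' j (R f))) <• (u j)) ((Γ j (P' j (R f))) <• (u j)) : A)‖ ∧
      ‖∑' j, (inner A ((Γ j (P' j (R f))) <• (u j)) ((Γ j (P' j (R f))) <• (u j)) : A)‖ ≤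
        ((lam₁ + 1) * Real.sqrt b + ε * ‖K‖) ^ 2 / (1 - lam₂) ^ 2 * ‖f‖ ^ 2 :=
  controlled_K_g_fusion_frame_perturbation_general P Λ v K Kad hKad Γ P' u R a b hsumΛ hsumΓ hframeΛ
    lam₁ lam₂ ε hlam₁ hlam₁' hlam₂ hlam₂' hε hε' hpert
end
end

section
/- Let W be an orthogonally complemented closed submodule of a Hilbert C*-module H with orthogonal projection P_W, and let T be an invertible adjointable operator on H such that T*T W ⊆ W. Then TW is an orthogonally complemented closed submodule of H and P_W T* = P_W T* P_{TW}. -/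
/-!
Since `T*T` is self-adjoint and leaves `W = range P` invariant, it commutes with the orthogonal
projection `P`. Consequently `Q = T P T⁻¹`, which is an idempotent with range `TW`, is self-adjoint:
`P T* = P T* T T⁻¹ = T* T P T⁻¹`, so `⟪T P T⁻¹ f, g⟫ = ⟪T⁻¹ f, T* T P T⁻¹ g⟫ = ⟪f, T P T⁻¹ g⟫`.
The same identity gives `P T* Q = T* T P P T⁻¹ = T* T P T⁻¹ = P T*`.
-/

namespace CStarModule

variable {A E : Type*} [NonUnitalRing A] [StarRing A] [Module ℂ A] [AddCommGroup E] [Module ℂ E]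
  [PartialOrder A] [SMul A E] [Norm A] [Norm E] [CStarModule A E]

local notation "⟪" x ", " y "⟫" => inner A x y

theorem ext_inner_left [StarModule ℂ A] {x y : E} (h : ∀ z : E, ⟪x, z⟫ = ⟪y, z⟫) : x = y := by
  rw [← sub_eq_zero, ← inner_self (A := A), inner_sub_left, h, sub_self]

theorem inner_adjoint_comp_self {T Tad : E → E} (hTad : ∀ x y : E, ⟪T x, y⟫ = ⟪x, Tad y⟫)
    (x y : E) : ⟪Tad (T x), y⟫ = ⟪x, Tad (T y)⟫ := by
  rw [← star_inner, ← hTad, star_inner, hTad]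

theorem apply_comm_of_mapsTo_range [StarModule ℂ A] {P S : E → E} (hP_idem : ∀ x, P (P x) = P x)
    (hP_sa : ∀ x y : E, ⟪P x, y⟫ = ⟪x, P y⟫) (hS_sa : ∀ x y : E, ⟪S x, y⟫ = ⟪x, S y⟫)
    (hS : Set.MapsTo S (Set.range P) (Set.range P)) (x : E) : P (S x) = S (P x) := by
  have hPSP : ∀ y, P (S (P y)) = S (P y) := fun y => by
    obtain ⟨z, hz⟩ := hS ⟨y, rfl⟩
    rw [← hz, hP_idem]
  refine ext_inner_left (A := A) fun y => ?_
  calc ⟪P (S x), y⟫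
      = ⟪x, P (S (P y))⟫ := by rw [hP_sa, hS_sa, hPSP]
    _ = ⟪P (S (P x)), y⟫ := by rw [← hP_sa, ← hS_sa, ← hP_sa]
    _ = ⟪S (P x), y⟫ := by rw [hPSP]

theorem inner_conj_left {P T Tad Tinv : E → E} (hP_sa : ∀ x y : E, ⟪P x, y⟫ = ⟪x, P y⟫)
    (hTad : ∀ x y : E, ⟪T x, y⟫ = ⟪x, Tad y⟫) (hTTinv : ∀ x, T (Tinv x) = x)
    (hcomm : ∀ x, P (Tad (T x)) = Tad (T (P x))) (f g : E) :
    ⟪T (P (Tinv f)), g⟫ = ⟪f, T (P (Tinv g))⟫ := by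
  calc ⟪T (P (Tinv f)), g⟫
      = ⟪Tinv f, P (Tad (T (Tinv g)))⟫ := by rw [hTad, hP_sa, hTTinv]
    _ = ⟪f, T (P (Tinv g))⟫ := by rw [hcomm, ← hTad, hTTinv]

end CStarModule

theorem image_submodule_orthogonally_complemented_general
    {A : Type*} [CStarAlgebra A] [PartialOrder A]
    {H : Type*} [NormedAddCommGroup H] [NormedSpace ℂ H] [SMul A H] [CStarModule A H]
    (P : H →L[ℂ] H)
    (hP_idem : P.comp P = P)
    (hP_sa : ∀ f g : H, (inner A (P f) g : A) = inner A f (P g))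
    (T Tad Tinv : H →L[ℂ] H)
    (hTad : ∀ x y : H, (inner A (T x) y : A) = inner A x (Tad y))
    (hTinv₁ : T.comp Tinv = ContinuousLinearMap.id ℂ H)
    (hTinv₂ : Tinv.comp T = ContinuousLinearMap.id ℂ H)
    (hTW : ∀ x : H, x ∈ Set.range P → Tad (T x) ∈ Set.range P) :
    IsClosed (T '' Set.range P) ∧
    (∃ Q : H →L[ℂ] H, Q.comp Q = Q ∧ (∀ f g : H, (inner A (Q f) g : A) = inner A f (Q g)) ∧
      Set.range Q = T '' Set.range P ∧
      ∀ f : H, P (Tad f) = P (Tad (Q f))) := by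
  have hPP : ∀ x, P (P x) = P x := ContinuousLinearMap.ext_iff.mp hP_idem
  have hTTinv : ∀ x, T (Tinv x) = x := ContinuousLinearMap.ext_iff.mp hTinv₁
  have hTinvT : ∀ x, Tinv (T x) = x := ContinuousLinearMap.ext_iff.mp hTinv₂
  have hcomm : ∀ x, P (Tad (T x)) = Tad (T (P x)) :=
    CStarModule.apply_comm_of_mapsTo_range hPP hP_sa
      (CStarModule.inner_adjoint_comp_self hTad) hTW
  set Q : H →L[ℂ] H := T.comp (P.comp Tinv)
  have hQ_idem : Q.comp Q = Q := by
    ext x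
    simp only [Q, ContinuousLinearMap.comp_apply, hTinvT, hPP]
  have hQ_range : Set.range Q = T '' Set.range P := by
    simp only [Q, ContinuousLinearMap.coe_comp, Set.range_comp,
      (Function.RightInverse.surjective hTinvT).range_comp]
  have hQ_closed : IsClosed (Set.range Q) := by
    have := ContinuousLinearMap.IsIdempotentElem.isClosed_range hQ_idem
    rwa [LinearMap.coe_range, ContinuousLinearMap.coe_coe] at this
  refine ⟨hQ_range ▸ hQ_closed, Q, hQ_idem,
    CStarModule.inner_conj_left (P := P) hP_sa hTad hTTinv hcomm, hQ_range, fun f => ?_⟩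
  conv_lhs => rw [← hTTinv f]
  simp only [Q, ContinuousLinearMap.comp_apply, hcomm, hPP]

/-- if `W` is an orthogonally complemented closed submodule of a Hilbert
C*-module `H` with orthogonal projection `P`, and `T` is an invertible adjointable
operator with `T*TW ⊆ W`, then `TW` is an orthogonally complemented closed submodule
(with an orthogonal projection `Q` onto it) and `P T* = P T* P_{TW}`. -/
theorem image_submodule_orthogonally_complemented
    {A : Type*} [CStarAlgebra A] [PartialOrder A] [StarOrderedRing A]
    {H : Type*} [NormedAddCommGroup H] [NormedSpace ℂ H] [SMul A H] [CStarModule A H]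
    (P : H →L[ℂ] H)
    (hP_idem : P.comp P = P)
    (hP_sa : ∀ f g : H, (inner A (P f) g : A) = inner A f (P g))
    (T Tad Tinv : H →L[ℂ] H)
    (hTad : ∀ x y : H, (inner A (T x) y : A) = inner A x (Tad y))
    (hTinv₁ : T.comp Tinv = ContinuousLinearMap.id ℂ H)
    (hTinv₂ : Tinv.comp T = ContinuousLinearMap.id ℂ H)
    (hTW : ∀ x : H, x ∈ Set.range P → Tad (T x) ∈ Set.range P) :
    IsClosed (T '' Set.range P) ∧
    (∃ Q : H →L[ℂ] H, Q.comp Q = Q ∧ (∀ f g : H, (inner A (Q f) g : A) = inner A f (Q g)) ∧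
      Set.range Q = T '' Set.range P ∧
      ∀ f : H, P (Tad f) = P (Tad (Q f))) :=
  image_submodule_orthogonally_complemented_general P hP_idem hP_sa T Tad Tinv hTad hTinv₁ hTinv₂
    hTW
end
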